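/- arXiv:2412.11928 — 4 statements merged into one kernel-verified Lean document; each statement's English description precedes it below -/
import Mathlib

section
/- Let m, the curve data (γ, ν, κ) and the tubular data (I, Φ, Ω) with Assumption 2 be as in the context, let ε > 0, and for x = (x₁,x₂) ∈ ℂ² write x⊙σ := x₁σ₁ + x₂σ₂. For a C^∞ function u : ℝ² → ℂ² with compact support contained in Ω, define w(s,y) := √(1 − y κ(s)) · u(Φ(s,y)) for (s,y) ∈ ℝ × I. Then for every (s,y) ∈ ℝ × I: √(1 − y κ(s)) · (H_ε u)(Φ(s,y)) = m(Φ(s,y)) σ₃ w(s,y) − (iε/(1 − y κ(s))) (γ'(s)⊙σ) ∂_s w(s,y) − iε (ν(s)⊙σ) ∂_y w(s,y) − (iε y κ'(s)/(2(1 − y κ(s))²)) (γ'(s)⊙σ) w(s,y) − (iε κ(s)/(2(1 − y κ(s)))) (ν(s)⊙σ) w(s,y). -/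
open MeasureTheory Complex

noncomputable section

abbrev C2 := Fin 2 → ℂ

def pauli1 : Matrix (Fin 2) (Fin 2) ℂ := !![0, 1; 1, 0]
def pauli2 : Matrix (Fin 2) (Fin 2) ℂ := !![0, -Complex.I; Complex.I, 0]
def pauli3 : Matrix (Fin 2) (Fin 2) ℂ := !![1, 0; 0, -1]

def enorm2 (v : ℝ × ℝ) : ℝ := Real.sqrt (v.1 ^ 2 + v.2 ^ 2)
def perp2 (v : ℝ × ℝ) : ℝ × ℝ := (-v.2, v.1)
def dot2 (v w : ℝ × ℝ) : ℝ := v.1 * w.1 + v.2 * w.2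
def grad2 (m : ℝ × ℝ → ℝ) (x : ℝ × ℝ) : ℝ × ℝ := (fderiv ℝ m x (1, 0), fderiv ℝ m x (0, 1))

def pdx (u : ℝ × ℝ → C2) (x : ℝ × ℝ) : C2 := fderiv ℝ u x (1, 0)
def pdy (u : ℝ × ℝ → C2) (x : ℝ × ℝ) : C2 := fderiv ℝ u x (0, 1)

def diracOp (ε : ℝ) (m : ℝ × ℝ → ℝ) (u : ℝ × ℝ → C2) (x : ℝ × ℝ) : C2 :=
  (m x : ℂ) • pauli3.mulVec (u x)
    - (Complex.I * (ε : ℂ)) • pauli1.mulVec (pdx u x)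
    - (Complex.I * (ε : ℂ)) • pauli2.mulVec (pdy u x)

structure IsClassicalSolution (ε : ℝ) (m : ℝ × ℝ → ℝ) (ψ : ℝ → ℝ × ℝ → C2) : Prop where
  smooth : ContDiff ℝ (⊤ : ℕ∞) (fun p : ℝ × (ℝ × ℝ) => ψ p.1 p.2)
  schwartz : ∀ t : ℝ, ∀ k n : ℕ, ∃ C : ℝ, ∀ x : ℝ × ℝ,
      ‖x‖ ^ k * ‖iteratedFDeriv ℝ n (ψ t) x‖ ≤ C
  l2diff : ∃ F : ℝ → Lp C2 2 (volume : Measure (ℝ × ℝ)),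
      Differentiable ℝ F ∧ ∀ t : ℝ, (F t : ℝ × ℝ → C2) =ᵐ[volume] ψ t
  eqn : ∀ t x, (Complex.I * (ε : ℂ)) • deriv (fun τ => ψ τ x) t = diracOp ε m (ψ t) x

def nuVec (m : ℝ × ℝ → ℝ) (γ : ℝ → ℝ × ℝ) (s : ℝ) : ℝ × ℝ :=
  (enorm2 (grad2 m (γ s)))⁻¹ • grad2 m (γ s)

def curv (m : ℝ × ℝ → ℝ) (γ : ℝ → ℝ × ℝ) (s : ℝ) : ℝ :=
  dot2 (deriv (deriv γ) s) (nuVec m γ s)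

def thetaFun (m : ℝ × ℝ → ℝ) (γ : ℝ → ℝ × ℝ) (θ₀ : ℝ) (s : ℝ) : ℝ :=
  θ₀ + ∫ η in (0:ℝ)..s, curv m γ η

def tubeMap (m : ℝ × ℝ → ℝ) (γ : ℝ → ℝ × ℝ) (p : ℝ × ℝ) : ℝ × ℝ :=
  γ p.1 + p.2 • nuVec m γ p.1

structure CurveData (m : ℝ × ℝ → ℝ) (γ : ℝ → ℝ × ℝ) : Prop where
  smooth : ContDiff ℝ (⊤ : ℕ∞) γ
  grad_ne : ∀ s, grad2 m (γ s) ≠ 0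
  ode : ∀ s, deriv γ s = (enorm2 (grad2 m (γ s)))⁻¹ • (-(perp2 (grad2 m (γ s))))
  start : m (γ 0) = 0

structure TubularData (m : ℝ × ℝ → ℝ) (γ : ℝ → ℝ × ℝ) (K : ℝ) : Prop where
  Ksup : K = sSup (Set.range fun s => |curv m γ s|)
  Kpos : 0 < K
  Kbdd : BddAbove (Set.range fun s => |curv m γ s|)
  inj : Set.InjOn (tubeMap m γ) (Set.univ ×ˢ Set.Ioo (-(1/(2*K))) (1/(2*K)))
  inv : ∃ Ψ : ℝ × ℝ → ℝ × ℝ,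
      ContDiffOn ℝ (⊤ : ℕ∞) Ψ (tubeMap m γ '' (Set.univ ×ˢ Set.Ioo (-(1/(2*K))) (1/(2*K)))) ∧
      ∀ p ∈ Set.univ ×ˢ Set.Ioo (-(1/(2*K))) (1/(2*K)), Ψ (tubeMap m γ p) = p

def uMat (θv : ℝ) : Matrix (Fin 2) (Fin 2) ℂ :=
  !![Complex.exp (Complex.I * ((Real.pi/4 + θv/2 : ℝ) : ℂ)),
     -Complex.exp (-(Complex.I * ((Real.pi/4 + θv/2 : ℝ) : ℂ)));
     Complex.exp (Complex.I * ((Real.pi/4 + θv/2 : ℝ) : ℂ)),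
     Complex.exp (-(Complex.I * ((Real.pi/4 + θv/2 : ℝ) : ℂ)))]

def uOp (m : ℝ × ℝ → ℝ) (γ : ℝ → ℝ × ℝ) (θ₀ : ℝ) (u : ℝ × ℝ → C2) (p : ℝ × ℝ) : C2 :=
  ((Real.sqrt ((1 - p.2 * curv m γ p.1)/2) : ℝ) : ℂ) •
    (uMat (thetaFun m γ θ₀ p.1)).mulVec (u (tubeMap m γ p))

def transOp (ε : ℝ) (m : ℝ × ℝ → ℝ) (γ : ℝ → ℝ × ℝ) (v : ℝ × ℝ → C2) (p : ℝ × ℝ) : C2 :=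
  (m (tubeMap m γ p) : ℂ) • pauli1.mulVec (v p)
  + (Complex.I * (ε : ℂ)) • pauli2.mulVec (pdy v p)
  - (Complex.I * (ε : ℂ) / ((1 - p.2 * curv m γ p.1 : ℝ) : ℂ)) • pauli3.mulVec (pdx v p)
  - (Complex.I * (ε : ℂ) * (p.2 : ℂ) * ((deriv (curv m γ) p.1 : ℝ) : ℂ)
      / ((2 * (1 - p.2 * curv m γ p.1)^2 : ℝ) : ℂ)) • pauli3.mulVec (v p)

def odot (v : ℝ × ℝ) : Matrix (Fin 2) (Fin 2) ℂ := (v.1 : ℂ) • pauli1 + (v.2 : ℂ) • pauli2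

/-! The derivative part `σ₁∂₁ + σ₂∂₂` of `H_ε` is unchanged when written in any positively
oriented orthonormal frame, in particular in the frame `(γ', ν)`. By the Frenet equations
`γ'' = κν` and `ν' = -κγ'`, the differential of `Φ` at `(s, y)` sends `∂_s` to `(1 - yκ) γ'` and
`∂_y` to `ν`, so `∂_s` and `∂_y` of `u ∘ Φ` are `(1 - yκ) ∂_{γ'} u` and `∂_ν u`. Differentiating
the weight `√(1 - yκ)` produces the two zero-order terms. -/

lemma ContinuousLinearMap.apply_eq_fst_smul_add_snd_smul {E : Type*} [AddCommGroup E]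
    [Module ℝ E] [TopologicalSpace E] (D : ℝ × ℝ →L[ℝ] E) (v : ℝ × ℝ) :
    D v = v.1 • D (1, 0) + v.2 • D (0, 1) := by
  conv_lhs => rw [show v = v.1 • ((1 : ℝ), (0 : ℝ)) + v.2 • ((0 : ℝ), (1 : ℝ)) by ext <;> simp]
  rw [map_add, map_smul, map_smul]

lemma odot_mulVec_add_odot_perp2_mulVec (D : ℝ × ℝ →L[ℝ] C2) (t : ℝ × ℝ)
    (ht : t.1 ^ 2 + t.2 ^ 2 = 1) :
    (odot t).mulVec (D t) + (odot (perp2 t)).mulVec (D (perp2 t))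
      = pauli1.mulVec (D (1, 0)) + pauli2.mulVec (D (0, 1)) := by
  have htC : (t.1 : ℂ) ^ 2 + (t.2 : ℂ) ^ 2 = 1 := by exact_mod_cast ht
  rw [D.apply_eq_fst_smul_add_snd_smul t, D.apply_eq_fst_smul_add_snd_smul (perp2 t)]
  ext i
  fin_cases i <;>
    simp [odot, perp2, pauli1, pauli2, dotProduct, Fin.sum_univ_two, Complex.real_smul]
  · linear_combination (D (1, 0) 1 - I * D (0, 1) 1) * htC
  · linear_combination (D (1, 0) 0 + I * D (0, 1) 0) * htC

lemma TubularData.one_half_le_one_sub_mul_curv {m : ℝ × ℝ → ℝ} {γ : ℝ → ℝ × ℝ} {K : ℝ}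
    (h : TubularData m γ K) (s : ℝ) {y : ℝ} (hy : y ∈ Set.Ioo (-(1/(2*K))) (1/(2*K))) :
    1 / 2 ≤ 1 - y * curv m γ s := by
  have hκ : |curv m γ s| ≤ K := h.Ksup ▸ le_csSup h.Kbdd ⟨s, rfl⟩
  have hyκ : |y * curv m γ s| ≤ 1 / 2 := calc
    |y * curv m γ s| = |y| * |curv m γ s| := abs_mul _ _
    _ ≤ 1 / (2 * K) * K :=
      mul_le_mul (abs_lt.mpr hy).le hκ (abs_nonneg _) (by have := h.Kpos; positivity)
    _ = 1 / 2 := by field_simp [h.Kpos.ne']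
  linarith [(abs_le.mp hyκ).2]

def weightedPullback (m : ℝ × ℝ → ℝ) (γ : ℝ → ℝ × ℝ) (u : ℝ × ℝ → C2) (p : ℝ × ℝ) : C2 :=
  ((Real.sqrt (1 - p.2 * curv m γ p.1) : ℝ) : ℂ) • u (tubeMap m γ p)

namespace CurveData

variable {m : ℝ × ℝ → ℝ} {γ : ℝ → ℝ × ℝ} (h : CurveData m γ)
include h

lemma nuVec_eq_perp2_deriv (s : ℝ) : nuVec m γ s = perp2 (deriv γ s) := by
  rw [h.ode s]
  simp [nuVec, perp2, Prod.ext_iff, mul_comm]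

lemma deriv_fst_sq_add_deriv_snd_sq (s : ℝ) : (deriv γ s).1 ^ 2 + (deriv γ s).2 ^ 2 = 1 := by
  have hpos : 0 < (grad2 m (γ s)).1 ^ 2 + (grad2 m (γ s)).2 ^ 2 := by
    have : (grad2 m (γ s)).1 ≠ 0 ∨ (grad2 m (γ s)).2 ≠ 0 := by
      by_contra! hc
      exact h.grad_ne s (Prod.ext hc.1 hc.2)
    rcases this with h1 | h2 <;> positivity
  have hsq := Real.sq_sqrt hpos.le
  have hne := (Real.sqrt_pos.mpr hpos).ne'
  rw [h.ode s]
  simp only [enorm2, perp2, Prod.smul_fst, Prod.smul_snd, Prod.fst_neg, Prod.snd_neg,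
    smul_eq_mul]
  field_simp
  linarith

lemma contDiff_deriv : ContDiff ℝ (⊤ : ℕ∞) (deriv γ) :=
  (contDiff_infty_iff_deriv.mp h.smooth).2

lemma hasDerivAt_deriv_fst (s : ℝ) :
    HasDerivAt (fun t => (deriv γ t).1) (deriv (deriv γ) s).1 s :=
  (hasFDerivAt_fst.comp_hasDerivAt s (h.contDiff_deriv.differentiable (by simp) s).hasDerivAt :)

lemma hasDerivAt_deriv_snd (s : ℝ) :
    HasDerivAt (fun t => (deriv γ t).2) (deriv (deriv γ) s).2 s :=
  (hasFDerivAt_snd.comp_hasDerivAt s (h.contDiff_deriv.differentiable (by simp) s).hasDerivAt :)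

lemma contDiff_nuVec : ContDiff ℝ (⊤ : ℕ∞) (nuVec m γ) := by
  rw [funext h.nuVec_eq_perp2_deriv]
  exact h.contDiff_deriv.snd.neg.prodMk h.contDiff_deriv.fst

-- `γ''` is orthogonal to the unit vector `γ'`, and `ν` spans the normal line.
lemma deriv_deriv_eq_curv_smul_nuVec (s : ℝ) :
    deriv (deriv γ) s = curv m γ s • nuVec m γ s := by
  have horth :
      (deriv γ s).1 * (deriv (deriv γ) s).1 + (deriv γ s).2 * (deriv (deriv γ) s).2 = 0 := by
    have hd :=
      ((h.hasDerivAt_deriv_fst s).fun_pow 2).fun_add ((h.hasDerivAt_deriv_snd s).fun_pow 2)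
    rw [show (fun t => (deriv γ t).1 ^ 2 + (deriv γ t).2 ^ 2) = fun _ => (1 : ℝ) from
      funext h.deriv_fst_sq_add_deriv_snd_sq] at hd
    have := hd.unique (hasDerivAt_const s 1)
    norm_num at this
    linarith
  have hunit := h.deriv_fst_sq_add_deriv_snd_sq s
  rw [curv, h.nuVec_eq_perp2_deriv]
  ext <;> simp only [dot2, perp2, Prod.smul_fst, Prod.smul_snd, smul_eq_mul]
  · linear_combination (deriv γ s).1 * horth - (deriv (deriv γ) s).1 * hunit
  · linear_combination (deriv γ s).2 * horth - (deriv (deriv γ) s).2 * hunit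

lemma hasDerivAt_nuVec (s : ℝ) :
    HasDerivAt (nuVec m γ) (-(curv m γ s) • deriv γ s) s := by
  rw [funext h.nuVec_eq_perp2_deriv]
  refine ((h.hasDerivAt_deriv_snd s).fun_neg.prodMk (h.hasDerivAt_deriv_fst s)).congr_deriv ?_
  rw [h.deriv_deriv_eq_curv_smul_nuVec, h.nuVec_eq_perp2_deriv]
  ext <;> simp [perp2]

lemma differentiable_curv : Differentiable ℝ (curv m γ) := by
  have hγ'' : ContDiff ℝ (⊤ : ℕ∞) (deriv (deriv γ)) :=
    (contDiff_infty_iff_deriv.mp h.contDiff_deriv).2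
  have hν := h.contDiff_nuVec.differentiable (by simp)
  have hγ''d := hγ''.differentiable (by simp)
  exact (hγ''d.fst.mul hν.fst).add (hγ''d.snd.mul hν.snd)

lemma hasFDerivAt_tubeMap (p : ℝ × ℝ) :
    HasFDerivAt (tubeMap m γ)
      (((1 - p.2 * curv m γ p.1) • ContinuousLinearMap.fst ℝ ℝ ℝ).smulRight (deriv γ p.1)
        + (ContinuousLinearMap.snd ℝ ℝ ℝ).smulRight (nuVec m γ p.1)) p := by
  have hγ := (h.smooth.differentiable (by simp) p.1).hasDerivAt.hasFDerivAt.comp p hasFDerivAt_fst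
  have hν := (h.hasDerivAt_nuVec p.1).hasFDerivAt.comp p hasFDerivAt_fst
  refine (hγ.add (hasFDerivAt_snd.smul hν)).congr_fderiv ?_
  ext <;> simp <;> ring

lemma hasFDerivAt_sqrt_one_sub_mul_curv {p : ℝ × ℝ} (hp : 0 < 1 - p.2 * curv m γ p.1) :
    HasFDerivAt (fun p : ℝ × ℝ => Real.sqrt (1 - p.2 * curv m γ p.1))
      ((1 / (2 * Real.sqrt (1 - p.2 * curv m γ p.1))) •
        -((p.2 * deriv (curv m γ) p.1) • ContinuousLinearMap.fst ℝ ℝ ℝ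
          + curv m γ p.1 • ContinuousLinearMap.snd ℝ ℝ ℝ)) p := by
  have hκ := (h.differentiable_curv p.1).hasDerivAt.hasFDerivAt.comp p hasFDerivAt_fst
  have hr := (hasFDerivAt_const (1 : ℝ) p).sub (hasFDerivAt_snd.mul hκ)
  refine ((Real.hasDerivAt_sqrt hp.ne').comp_hasFDerivAt p hr).congr_fderiv ?_
  ext <;> simp

variable {u : ℝ × ℝ → C2}

lemma fderiv_weightedPullback_apply {p : ℝ × ℝ} (hu : DifferentiableAt ℝ u (tubeMap m γ p))
    (hp : 0 < 1 - p.2 * curv m γ p.1) (v : ℝ × ℝ) :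
    fderiv ℝ (weightedPullback m γ u) p v
      = ((Real.sqrt (1 - p.2 * curv m γ p.1) : ℝ) : ℂ) • fderiv ℝ u (tubeMap m γ p)
          ((v.1 * (1 - p.2 * curv m γ p.1)) • deriv γ p.1 + v.2 • nuVec m γ p.1)
        - (((v.1 * p.2 * deriv (curv m γ) p.1 + v.2 * curv m γ p.1)
            / (2 * Real.sqrt (1 - p.2 * curv m γ p.1)) : ℝ) : ℂ) • u (tubeMap m γ p) := by
  have hw : HasFDerivAt (weightedPullback m γ u) _ p :=
    (Complex.ofRealCLM.hasFDerivAt.comp p (h.hasFDerivAt_sqrt_one_sub_mul_curv hp)).smul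
      (hu.hasFDerivAt.comp p (h.hasFDerivAt_tubeMap p))
  rw [hw.fderiv]
  simp
  module

end CurveData

theorem stmt2_general
    (m : ℝ × ℝ → ℝ)
    (γ : ℝ → ℝ × ℝ) (hcurve : CurveData m γ)
    (K : ℝ) (htube : TubularData m γ K)
    (ε : ℝ)
    (u : ℝ × ℝ → C2) (hu : ContDiff ℝ (⊤ : ℕ∞) u)
    (w : ℝ × ℝ → C2)
    (hw : ∀ p : ℝ × ℝ, w p = ((Real.sqrt (1 - p.2 * curv m γ p.1) : ℝ) : ℂ) • u (tubeMap m γ p))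
    (s y : ℝ) (hy : y ∈ Set.Ioo (-(1/(2*K))) (1/(2*K))) :
    ((Real.sqrt (1 - y * curv m γ s) : ℝ) : ℂ) • diracOp ε m u (tubeMap m γ (s, y))
      = (m (tubeMap m γ (s, y)) : ℂ) • pauli3.mulVec (w (s, y))
        - (Complex.I * (ε : ℂ) / ((1 - y * curv m γ s : ℝ) : ℂ)) •
            (odot (deriv γ s)).mulVec (pdx w (s, y))
        - (Complex.I * (ε : ℂ)) • (odot (nuVec m γ s)).mulVec (pdy w (s, y))
        - (Complex.I * (ε : ℂ) * (y : ℂ) * ((deriv (curv m γ) s : ℝ) : ℂ)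
            / ((2 * (1 - y * curv m γ s)^2 : ℝ) : ℂ)) • (odot (deriv γ s)).mulVec (w (s, y))
        - (Complex.I * (ε : ℂ) * ((curv m γ s : ℝ) : ℂ)
            / ((2 * (1 - y * curv m γ s) : ℝ) : ℂ)) • (odot (nuVec m γ s)).mulVec (w (s, y)) := by
  have hq : 0 < 1 - y * curv m γ s := by linarith [htube.one_half_le_one_sub_mul_curv s hy]
  set X := tubeMap m γ (s, y)
  set D := fderiv ℝ u X
  have hframe := odot_mulVec_add_odot_perp2_mulVec D (deriv γ s)
    (hcurve.deriv_fst_sq_add_deriv_snd_sq s)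
  rw [← hcurve.nuVec_eq_perp2_deriv] at hframe
  have hdirac : diracOp ε m u X = (m X : ℂ) • pauli3.mulVec (u X)
      - (I * ε) • (pauli1.mulVec (D (1, 0)) + pauli2.mulVec (D (0, 1))) := by
    rw [diracOp, smul_add, sub_sub]; rfl
  have hdu : DifferentiableAt ℝ u X := hu.differentiable (by simp) X
  have hw' : w = weightedPullback m γ u := funext hw
  rw [hdirac, ← hframe, pdx, pdy, hw', hcurve.fderiv_weightedPullback_apply hdu hq,
    hcurve.fderiv_weightedPullback_apply hdu hq]
  simp only [weightedPullback, map_add, map_smul, Matrix.mulVec_add, Matrix.mulVec_sub,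
    Matrix.mulVec_smul, smul_add, smul_sub, smul_smul]
  -- with `r = √(1 - yκ)` and `1 - yκ = r²` the zero-order terms cancel
  have hr := Real.sqrt_pos.mpr hq
  have hq_sq := (Real.sq_sqrt hq.le).symm
  generalize Real.sqrt (1 - y * curv m γ s) = r at hr hq_sq ⊢
  rw [hq_sq]
  have : (r : ℂ) ≠ 0 := by exact_mod_cast hr.ne'
  match_scalars <;> push_cast [Complex.coe_algebraMap] <;> field_simp <;> ring

/-- conjugation of the Dirac operator by the change of variables `V_Φ`
(weighted pull-back to normal geodesic coordinates). -/
theorem stmt2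
    (m : ℝ × ℝ → ℝ) (hm : ContDiff ℝ (⊤ : ℕ∞) m)
    (γ : ℝ → ℝ × ℝ) (hcurve : CurveData m γ)
    (K : ℝ) (htube : TubularData m γ K)
    (ε : ℝ) (hε : 0 < ε)
    (u : ℝ × ℝ → C2) (hu : ContDiff ℝ (⊤ : ℕ∞) u) (husupp : HasCompactSupport u)
    (hΩ : tsupport u ⊆ tubeMap m γ '' (Set.univ ×ˢ Set.Ioo (-(1/(2*K))) (1/(2*K))))
    (w : ℝ × ℝ → C2)
    (hw : ∀ p : ℝ × ℝ, w p = ((Real.sqrt (1 - p.2 * curv m γ p.1) : ℝ) : ℂ) • u (tubeMap m γ p))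
    (s y : ℝ) (hy : y ∈ Set.Ioo (-(1/(2*K))) (1/(2*K))) :
    ((Real.sqrt (1 - y * curv m γ s) : ℝ) : ℂ) • diracOp ε m u (tubeMap m γ (s, y))
      = (m (tubeMap m γ (s, y)) : ℂ) • pauli3.mulVec (w (s, y))
        - (Complex.I * (ε : ℂ) / ((1 - y * curv m γ s : ℝ) : ℂ)) •
            (odot (deriv γ s)).mulVec (pdx w (s, y))
        - (Complex.I * (ε : ℂ)) • (odot (nuVec m γ s)).mulVec (pdy w (s, y))
        - (Complex.I * (ε : ℂ) * (y : ℂ) * ((deriv (curv m γ) s : ℝ) : ℂ)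
            / ((2 * (1 - y * curv m γ s)^2 : ℝ) : ℂ)) • (odot (deriv γ s)).mulVec (w (s, y))
        - (Complex.I * (ε : ℂ) * ((curv m γ s : ℝ) : ℂ)
            / ((2 * (1 - y * curv m γ s) : ℝ) : ℂ)) • (odot (nuVec m γ s)).mulVec (w (s, y)) :=
  stmt2_general m γ hcurve K htube ε u hu w hw s y hy
end
end

section
/- Let H be a complex Hilbert space, d ≥ 1, A an index set, and for each n ∈ A let Π_n : ℝ^d_x × ℝ^d_ξ → B(H) be a continuously differentiable map into the bounded operators on H such that Π_n(z) Π_k(z) = δ_{nk} Π_n(z) for all z ∈ ℝ^{2d} and all n,k ∈ A (a family of pairwise orthogonal projections). Then for all j, k, ℓ ∈ A and all z ∈ ℝ^{2d}: Π_k(z) ( {Π_j, Π_ℓ}(z) − {Π_ℓ, Π_j}(z) ) Π_k(z) = 0. -/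
/-!
Differentiating `Πₙ Πₘ = δₙₘ Πₙ` gives the Leibniz rule `∂Πₙ Πₘ + Πₙ ∂Πₘ = δₙₘ ∂Πₙ` in every
direction. Moving `Πₖ` through both derivative factors with it,
`Πₖ ∂ᵤΠⱼ ∂ᵥΠℓ Πₖ = (δₖⱼ ∂ᵤΠₖ − ∂ᵤΠₖ Πⱼ)(δₖℓ ∂ᵥΠₖ − Πℓ ∂ᵥΠₖ)`, which is symmetric in `j` and `ℓ`
because `Πⱼ Πℓ = δⱼℓ Πⱼ`. So the sandwiched terms of `{Πⱼ, Πℓ}` and `{Πℓ, Πⱼ}` cancel in pairs.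
-/

noncomputable section

/-- Non-commutative Poisson bracket `{f,g} = Σᵢ ∂_{ξᵢ}f ∘ ∂_{xᵢ}g − ∂_{xᵢ}f ∘ ∂_{ξᵢ}g`
for operator-valued symbols on `ℝ^d_x × ℝ^d_ξ`. -/
def pBrack {H : Type*} [NormedAddCommGroup H] [InnerProductSpace ℂ H] (d : ℕ)
    (f g : ((Fin d → ℝ) × (Fin d → ℝ)) → (H →L[ℂ] H))
    (z : (Fin d → ℝ) × (Fin d → ℝ)) : H →L[ℂ] H :=
  ∑ i : Fin d,
    (fderiv ℝ f z (0, Pi.single i 1) * fderiv ℝ g z (Pi.single i 1, 0)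
      - fderiv ℝ f z (Pi.single i 1, 0) * fderiv ℝ g z (0, Pi.single i 1))

section

variable {A : Type*} [DecidableEq A]

theorem sandwich_mul_symm_of_leibniz {R : Type*} [Ring R] {p a b : A → R}
    (hp : Pairwise fun n m => p n * p m = 0)
    (ha : ∀ n m, a n * p m + p n * a m = if n = m then a n else 0)
    (hb : ∀ n m, b n * p m + p n * b m = if n = m then b n else 0) (j k ℓ : A) :
    p k * a j * b ℓ * p k = p k * a ℓ * b j * p k := by
  rcases eq_or_ne j ℓ with rfl | hjℓ
  · rfl
  have expand : ∀ j ℓ, p k * a j * b ℓ * p k =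
      ((if k = j then a k else 0) - a k * p j) * ((if ℓ = k then b ℓ else 0) - p ℓ * b k) := by
    intro j ℓ
    rw [← eq_sub_of_add_eq' (ha k j), ← eq_sub_of_add_eq (hb ℓ k)]
    noncomm_ring
  have cross_jℓ : a k * p j * (p ℓ * b k) = 0 := by rw [mul_assoc, ← mul_assoc (p j), hp hjℓ]; simp
  have cross_ℓj : a k * p ℓ * (p j * b k) = 0 := by rw [mul_assoc, ← mul_assoc (p ℓ), hp hjℓ.symm]; simp
  rw [expand, expand]
  split_ifs <;> subst_vars <;> simp_all [sub_mul, mul_sub, mul_assoc]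

theorem fderiv_mul_apply_of_orthogonalIdempotents {𝕜 E R : Type*} [NontriviallyNormedField 𝕜]
    [NormedAddCommGroup E] [NormedSpace 𝕜 E] [NormedRing R] [NormedAlgebra 𝕜 R]
    {P : A → E → R} {z : E} (hP : ∀ n, DifferentiableAt 𝕜 (P n) z)
    (horth : ∀ y, OrthogonalIdempotents (P · y)) (w : E) (n m : A) :
    fderiv 𝕜 (P n) z w * P m z + P n z * fderiv 𝕜 (P m) z w
      = if n = m then fderiv 𝕜 (P n) z w else 0 := by
  have hprod : P n * P m = fun y => if n = m then P n y else 0 :=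
    funext fun y => (horth y).mul_eq n m
  have := congr($(fderiv_mul' (hP n) (hP m)) w)
  rw [hprod] at this
  split_ifs at this ⊢ <;> simpa [add_comm] using this.symm

end

theorem stmt10_general {H : Type*} [NormedAddCommGroup H] [InnerProductSpace ℂ H]
    (d : ℕ) {A : Type*}
    (P : A → ((Fin d → ℝ) × (Fin d → ℝ)) → (H →L[ℂ] H))
    (hC1 : ∀ n, ContDiff ℝ 1 (P n))
    (hidem : ∀ n z, P n z * P n z = P n z)
    (horth : ∀ n k, n ≠ k → ∀ z, P n z * P k z = 0) :
    ∀ (j k ℓ : A) (z : (Fin d → ℝ) × (Fin d → ℝ)),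
      P k z * (pBrack d (P j) (P ℓ) z - pBrack d (P ℓ) (P j) z) * P k z = 0 := by
  classical
  intro j k ℓ z
  have hdiff : ∀ n, DifferentiableAt ℝ (P n) z := fun n => (hC1 n).differentiable one_ne_zero z
  have hP : ∀ y, OrthogonalIdempotents (P · y) :=
    fun y => ⟨fun n => hidem n y, fun n m h => horth n m h y⟩
  have hsymm : ∀ u v, P k z * fderiv ℝ (P j) z u * fderiv ℝ (P ℓ) z v * P k z
      = P k z * fderiv ℝ (P ℓ) z u * fderiv ℝ (P j) z v * P k z := fun u v =>
    sandwich_mul_symm_of_leibniz (hP z).ortho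
      (fderiv_mul_apply_of_orthogonalIdempotents hdiff hP u)
      (fderiv_mul_apply_of_orthogonalIdempotents hdiff hP v) j k ℓ
  simp only [pBrack, ← Finset.sum_sub_distrib, Finset.mul_sum, Finset.sum_mul]
  refine Finset.sum_eq_zero fun i _ => ?_
  simp only [mul_sub, sub_mul, ← mul_assoc]
  rw [hsymm, hsymm]
  abel

/-- for a pairwise orthogonal C¹ family of projections,
`Π_k ({Π_j,Π_ℓ} − {Π_ℓ,Π_j}) Π_k = 0`. -/
theorem stmt10 {H : Type*} [NormedAddCommGroup H] [InnerProductSpace ℂ H] [CompleteSpace H]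
    (d : ℕ) (hd : 1 ≤ d) {A : Type*}
    (P : A → ((Fin d → ℝ) × (Fin d → ℝ)) → (H →L[ℂ] H))
    (hC1 : ∀ n, ContDiff ℝ 1 (P n))
    (hidem : ∀ n z, P n z * P n z = P n z)
    (horth : ∀ n k, n ≠ k → ∀ z, P n z * P k z = 0) :
    ∀ (j k ℓ : A) (z : (Fin d → ℝ) × (Fin d → ℝ)),
      P k z * (pBrack d (P j) (P ℓ) z - pBrack d (P ℓ) (P j) z) * P k z = 0 :=
  stmt10_general d P hC1 hidem horth
end
end

section
/- Let ζ, λ ∈ ℝ with λ = −ζ, and let f, g : ℝ → ℂ be differentiable functions belonging to L²(ℝ,ℂ) that satisfy the eigenvalue system for the operator 𝒯 = !![ζ, a; a†, −ζ] with eigenvalue λ, namely: ζ f(y) + y g(y) + g'(y) = λ f(y) and y f(y) − f'(y) − ζ g(y) = λ g(y) for all y ∈ ℝ (here a = y + d/dy, a† = y − d/dy). Then f = 0 and g(y) = g(0) e^{−y²/2} for all y ∈ ℝ; i.e. the eigenspace of 𝒯 for the eigenvalue −ζ consists exactly of multiples of (0, e^{−y²/2}). -/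
open MeasureTheory

/-!
The second equation says `f' = y f` and, once `f = 0`, the first says `g' = -y g`. Solutions of
`h' = c y h` are `h 0 · exp (c y² / 2)`; for `c = 1` this has modulus at least `|h 0|`, which is not
square integrable on `ℝ` unless `h 0 = 0`.
-/

lemma hasDerivAt_cexp_mul_sq_div_two (c : ℂ) (y : ℝ) :
    HasDerivAt (fun t : ℝ => Complex.exp (c * (t : ℂ) ^ 2 / 2))
      (c * y * Complex.exp (c * (y : ℂ) ^ 2 / 2)) y := by
  have hsq : HasDerivAt (fun t : ℝ => c * (t : ℂ) ^ 2 / 2) (c * y) y := by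
    refine ((((Complex.ofRealCLM.hasDerivAt (x := y)).pow 2).const_mul c).div_const 2).congr_deriv
      ?_
    simp only [Complex.ofRealCLM_apply, Nat.cast_ofNat, Complex.ofReal_one]
    ring
  exact hsq.cexp.congr_deriv (mul_comm _ _)

lemma eq_mul_cexp_of_deriv_eq (c : ℂ) {f : ℝ → ℂ} (hf : Differentiable ℝ f)
    (hderiv : ∀ y, deriv f y = c * y * f y) (y : ℝ) :
    f y = f 0 * Complex.exp (c * (y : ℂ) ^ 2 / 2) := by
  have hconst : ∀ t, HasDerivAt (fun t : ℝ => f t * Complex.exp (-c * (t : ℂ) ^ 2 / 2)) 0 t := by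
    intro t
    refine ((hf t).hasDerivAt.mul (hasDerivAt_cexp_mul_sq_div_two (-c) t)).congr_deriv ?_
    rw [hderiv t]
    ring
  have h : f y * Complex.exp (-c * (y : ℂ) ^ 2 / 2) = f 0 := by
    simpa using is_const_of_deriv_eq_zero (fun t => (hconst t).differentiableAt)
      (fun t => (hconst t).deriv) y 0
  rw [← h, mul_assoc, ← Complex.exp_add, neg_mul, neg_div, neg_add_cancel, Complex.exp_zero,
    mul_one]

lemma eq_zero_of_integrable_sq_of_norm_le {α E : Type*} [MeasurableSpace α] {μ : Measure α}
    [NormedAddCommGroup E] {f : α → E} (hμ : μ Set.univ = ⊤)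
    (hf : Integrable (fun x => ‖f x‖ ^ 2) μ) (c : E) (hle : ∀ x, ‖c‖ ≤ ‖f x‖) : c = 0 := by
  have hc : Integrable (fun _ => ‖c‖ ^ 2) μ :=
    hf.mono aestronglyMeasurable_const (.of_forall fun x => by
      simp only [norm_pow, Real.norm_eq_abs, abs_norm]
      gcongr
      exact hle x)
  rcases integrable_const_iff.mp hc with hc | hc
  · simpa using hc
  · exact absurd hc.measure_univ_lt_top (by simp [hμ])

lemma norm_le_norm_mul_cexp_sq_div_two (z : ℂ) (y : ℝ) :
    ‖z‖ ≤ ‖z * Complex.exp ((y : ℂ) ^ 2 / 2)‖ := by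
  have harg : (y : ℂ) ^ 2 / 2 = ((y ^ 2 / 2 : ℝ) : ℂ) := by push_cast; ring
  rw [norm_mul, harg, Complex.norm_exp_ofReal]
  exact le_mul_of_one_le_right (norm_nonneg z) (Real.one_le_exp (by positivity))

theorem stmt18_general (ζ lam : ℝ) (hlam : lam = -ζ) (f g : ℝ → ℂ)
    (hf : Differentiable ℝ f) (hg : Differentiable ℝ g)
    (hfL2 : Integrable (fun y : ℝ => ‖f y‖ ^ 2))
    (heq1 : ∀ y : ℝ, (ζ : ℂ) * f y + (y : ℂ) * g y + deriv g y = (lam : ℂ) * f y)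
    (heq2 : ∀ y : ℝ, (y : ℂ) * f y - deriv f y - (ζ : ℂ) * g y = (lam : ℂ) * g y) :
    (∀ y : ℝ, f y = 0) ∧ (∀ y : ℝ, g y = g 0 * Complex.exp (-((y : ℂ) ^ 2) / 2)) := by
  subst hlam
  push_cast at heq1 heq2
  have hf' : ∀ y, deriv f y = 1 * y * f y := fun y => by
    linear_combination -heq2 y
  have hf_eq := eq_mul_cexp_of_deriv_eq 1 hf hf'
  have hf0 : f 0 = 0 := eq_zero_of_integrable_sq_of_norm_le Real.volume_univ hfL2 (f 0)
    fun y => by simpa only [hf_eq y, one_mul] using norm_le_norm_mul_cexp_sq_div_two (f 0) y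
  have hf_zero : ∀ y, f y = 0 := fun y => by rw [hf_eq y, hf0, zero_mul]
  have hg' : ∀ y, deriv g y = -1 * y * g y := fun y => by
    linear_combination heq1 y - 2 * ζ * hf_zero y
  refine ⟨hf_zero, fun y => ?_⟩
  rw [eq_mul_cexp_of_deriv_eq (-1) hg hg' y, neg_one_mul]

/-- the eigenspace of `𝒯 = !![ζ, a; a†, −ζ]` for the eigenvalue `−ζ`
consists exactly of multiples of `(0, e^{−y²/2})`. -/
theorem stmt18 (ζ lam : ℝ) (hlam : lam = -ζ) (f g : ℝ → ℂ)
    (hf : Differentiable ℝ f) (hg : Differentiable ℝ g)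
    (hfL2 : Integrable (fun y : ℝ => ‖f y‖ ^ 2))
    (hgL2 : Integrable (fun y : ℝ => ‖g y‖ ^ 2))
    (heq1 : ∀ y : ℝ, (ζ : ℂ) * f y + (y : ℂ) * g y + deriv g y = (lam : ℂ) * f y)
    (heq2 : ∀ y : ℝ, (y : ℂ) * f y - deriv f y - (ζ : ℂ) * g y = (lam : ℂ) * g y) :
    (∀ y : ℝ, f y = 0) ∧ (∀ y : ℝ, g y = g 0 * Complex.exp (-((y : ℂ) ^ 2) / 2)) :=
  stmt18_general ζ lam hlam f g hf hg hfL2 heq1 heq2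
end

section
/- Let (μ_{n,m})_{n,m∈ℕ} be a family of finite complex Borel measures on ℝ² such that: (a) for every finitely supported c : ℕ → ℂ, the complex measure Σ_{n,m} c_n conj(c_m) μ_{n,m} is a nonnegative measure; and (b) Σ_{n∈ℕ} μ_{n,n}(ℝ²) < ∞ (each μ_{n,n} is nonnegative by (a)). Then, with γ := Σ_{n∈ℕ} μ_{n,n} (a finite nonnegative Borel measure), there exist Borel measurable functions Γ_{n,m} : ℝ² → ℂ such that: (i) μ_{n,m}(A) = ∫_A Γ_{n,m} dγ for every Borel set A and all n,m ∈ ℕ; (ii) γ-almost everywhere, 0 ≤ Γ_{n,n} ≤ 1 for all n, Γ_{m,n} = conj(Γ_{n,m}) for all n,m, and for every finitely supported c : ℕ → ℂ one has Σ_{n,m} c_n conj(c_m) Γ_{n,m} ≥ 0 (pointwise positive semidefiniteness); and (iii) Σ_{n∈ℕ} ∫_{ℝ²} Γ_{n,n} dγ = Σ_{n∈ℕ} μ_{n,n}(ℝ²) < ∞. -/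
/-!
Testing the positivity hypothesis on vectors supported on one or two indices shows that, for
every Borel set `A`, the matrix `(μ n m A)` has a nonnegative diagonal, is Hermitian, and has
`μ n m A = 0` as soon as `μ n n A = μ m m A = 0`. Hence every `μ n m` is absolutely continuous
with respect to the trace measure `γ = ∑ n, μ n n`, and `Γ n m` is taken to be its
Radon–Nikodym derivative. For a fixed coefficient vector `c`, the function
`∑ c n * conj (c m) * Γ n m` has nonnegative integrals over all Borel sets, so it is nonnegative
almost everywhere; since this form is continuous in `c` and `ℕ → ℂ` is separable, a single null
set serves all `c` at once. The bound `Γ n n ≤ 1` comes from `μ n n ≤ γ`.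
-/

open MeasureTheory ComplexConjugate ComplexOrder

noncomputable section

variable {α ι : Type*} [MeasurableSpace α]

def kernelQuadForm (S : Finset ι) (φ : ι → ι → ℂ) (v : ι → ℂ) : ℂ :=
  ∑ n ∈ S, ∑ m ∈ S, v n * conj (v m) * φ n m

/-- Here `0 ≤ z` is the `ComplexOrder`: `z` is real and nonnegative. -/
def IsPosSemidefKernel (φ : ι → ι → ℂ) : Prop :=
  ∀ (S : Finset ι) (v : ι → ℂ), 0 ≤ kernelQuadForm S φ v

lemma kernelQuadForm_congr {S : Finset ι} {φ : ι → ι → ℂ} {v w : ι → ℂ}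
    (h : ∀ n ∈ S, v n = w n) : kernelQuadForm S φ v = kernelQuadForm S φ w :=
  Finset.sum_congr rfl fun n hn => Finset.sum_congr rfl fun m hm => by rw [h n hn, h m hm]

lemma kernelQuadForm_support_eq (c : ι →₀ ℂ) {S : Finset ι} (hS : c.support ⊆ S)
    (φ : ι → ι → ℂ) : kernelQuadForm c.support φ c = kernelQuadForm S φ c := by
  unfold kernelQuadForm
  rw [Finset.sum_subset hS fun n _ hn => by simp [Finsupp.notMem_support_iff.mp hn]]
  exact Finset.sum_congr rfl fun n _ =>
    Finset.sum_subset hS fun m _ hm => by simp [Finsupp.notMem_support_iff.mp hm]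

lemma isPosSemidefKernel_iff_finsupp {φ : ι → ι → ℂ} :
    IsPosSemidefKernel φ ↔ ∀ c : ι →₀ ℂ, 0 ≤ kernelQuadForm c.support φ c := by
  classical
  refine ⟨fun h c => h _ _, fun h S v => ?_⟩
  let c : ι →₀ ℂ := Finsupp.onFinset S (fun n => if n ∈ S then v n else 0)
    fun n hn => by by_contra hnS; simp [hnS] at hn
  have hcv : ∀ n ∈ S, c n = v n := fun n hn => by simp [c, hn]
  rw [kernelQuadForm_congr (φ := φ) fun n hn => (hcv n hn).symm,
    ← kernelQuadForm_support_eq c Finsupp.support_onFinset_subset]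
  exact h c

lemma continuous_kernelQuadForm (S : Finset ι) (φ : ι → ι → ℂ) :
    Continuous (kernelQuadForm S φ) := by
  unfold kernelQuadForm; fun_prop

namespace IsPosSemidefKernel

variable {φ : ι → ι → ℂ}

lemma diag_nonneg (h : IsPosSemidefKernel φ) (n : ι) : 0 ≤ φ n n := by
  simpa [kernelQuadForm] using h {n} 1

lemma two_point_nonneg (h : IsPosSemidefKernel φ) {n m : ι} (hnm : n ≠ m) (a b : ℂ) :
    0 ≤ a * conj a * φ n n + a * conj b * φ n m + (b * conj a * φ m n + b * conj b * φ m m) := by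
  classical
  simpa [kernelQuadForm, Finset.sum_pair hnm, hnm, hnm.symm] using
    h {n, m} (Function.update (fun _ => b) n a)

lemma conj_symm (h : IsPosSemidefKernel φ) (n m : ι) : φ m n = conj (φ n m) := by
  rcases eq_or_ne n m with rfl | hnm
  · exact (Complex.conj_eq_iff_im.2 (Complex.nonneg_iff.1 (h.diag_nonneg n)).2.symm).symm
  have im_eq (b : ℂ) := (Complex.nonneg_iff.1 (h.two_point_nonneg hnm 1 b)).2
  have h1 := im_eq 1
  have hI := im_eq Complex.I
  have hn := (Complex.nonneg_iff.1 (h.diag_nonneg n)).2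
  have hm := (Complex.nonneg_iff.1 (h.diag_nonneg m)).2
  simp only [map_one, mul_one, one_mul, Complex.add_im, Complex.conj_I, mul_neg, neg_mul,
    Complex.I_mul_I, neg_neg, Complex.neg_im, Complex.mul_im, Complex.I_re, zero_mul,
    Complex.I_im, zero_add] at h1 hI
  apply Complex.ext <;> simp only [Complex.conj_re, Complex.conj_im] <;> linarith

lemma eq_zero_of_diag_eq_zero (h : IsPosSemidefKernel φ) {n m : ι} (hn : φ n n = 0)
    (hm : φ m m = 0) : φ n m = 0 := by
  rcases eq_or_ne n m with rfl | hnm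
  · exact hn
  -- the test vector `(1, -φ n m)` yields `-2 |φ n m|² ≥ 0`
  have key := h.two_point_nonneg hnm 1 (-φ n m)
  rw [hn, hm, h.conj_symm n m] at key
  have : (1 : ℂ) * conj 1 * 0 + 1 * conj (-φ n m) * φ n m
      + (-φ n m * conj 1 * conj (φ n m) + -φ n m * conj (-φ n m) * 0)
      = ((-2 * Complex.normSq (φ n m) : ℝ) : ℂ) := by
    push_cast
    rw [← Complex.mul_conj]
    simp only [map_neg, map_one]
    ring
  rw [this, Complex.zero_le_real] at key
  exact Complex.normSq_eq_zero.1 (le_antisymm (by linarith) (Complex.normSq_nonneg _))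

end IsPosSemidefKernel

theorem ae_forall_of_forall_ae_of_isClosed {X : Type*} [TopologicalSpace X]
    [TopologicalSpace.SeparableSpace X] {ν : Measure α} {p : X → α → Prop}
    (hclosed : ∀ a, IsClosed {x | p x a}) (h : ∀ x, ∀ᵐ a ∂ν, p x a) : ∀ᵐ a ∂ν, ∀ x, p x a := by
  obtain ⟨D, hDc, hDd⟩ := TopologicalSpace.exists_countable_dense X
  filter_upwards [(ae_ball_iff hDc).2 fun x _ => h x] with a ha x
  exact hDd.induction ha (hclosed a) x

namespace Complex

theorem ae_nonneg_of_forall_setIntegral_nonneg {ν : Measure α} {f : α → ℂ} (hf : Integrable f ν)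
    (h : ∀ s, MeasurableSet s → ν s < ⊤ → 0 ≤ ∫ x in s, f x ∂ν) : 0 ≤ᵐ[ν] f := by
  have hre : 0 ≤ᵐ[ν] fun x => (f x).re :=
    MeasureTheory.ae_nonneg_of_forall_setIntegral_nonneg hf.re fun s hs hνs => by
      change 0 ≤ ∫ x in s, RCLike.re (f x) ∂ν
      rw [integral_re hf.integrableOn]; exact (nonneg_iff.1 (h s hs hνs)).1
  have him : (fun x => (f x).im) =ᵐ[ν] 0 :=
    hf.im.ae_eq_zero_of_forall_setIntegral_eq_zero fun s hs hνs => by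
      change ∫ x in s, RCLike.im (f x) ∂ν = 0
      rw [integral_im hf.integrableOn]; exact (nonneg_iff.1 (h s hs hνs)).2.symm
  filter_upwards [hre, him] with x hxre hxim
  exact nonneg_iff.2 ⟨hxre, hxim.symm⟩

theorem ae_le_of_forall_setIntegral_le {ν : Measure α} {f g : α → ℂ} (hf : Integrable f ν)
    (hg : Integrable g ν)
    (h : ∀ s, MeasurableSet s → ν s < ⊤ → ∫ x in s, f x ∂ν ≤ ∫ x in s, g x ∂ν) :
    f ≤ᵐ[ν] g := by
  filter_upwards [ae_nonneg_of_forall_setIntegral_nonneg (hg.sub hf) fun s hs hνs => by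
    simp only [Pi.sub_apply]
    rw [integral_sub hg.integrableOn hf.integrableOn, sub_nonneg]; exact h s hs hνs] with x hx
  exact sub_nonneg.1 hx

end Complex

namespace MeasureTheory.ComplexMeasure

theorem measurable_rnDeriv (c : ComplexMeasure α) (ν : Measure α) : Measurable (c.rnDeriv ν) :=
  measurable_of_re_im (SignedMeasure.measurable_rnDeriv _ _)
    (SignedMeasure.measurable_rnDeriv _ _)

theorem withDensityᵥ_rnDeriv_eq (c : ComplexMeasure α) (ν : Measure α) [SigmaFinite ν]
    (h : c ≪ᵥ ν.toENNRealVectorMeasure) : ν.withDensityᵥ (c.rnDeriv ν) = c := by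
  rw [absolutelyContinuous_ennreal_iff] at h
  ext A hA : 1
  rw [withDensityᵥ_apply (c.integrable_rnDeriv ν) hA]
  apply Complex.ext
  · rw [← RCLike.re_eq_complex_re, ← integral_re (c.integrable_rnDeriv ν).integrableOn]
    change ∫ x in A, c.re.rnDeriv ν x ∂ν = c.re A
    rw [← withDensityᵥ_apply (SignedMeasure.integrable_rnDeriv _ _) hA,
      SignedMeasure.withDensityᵥ_rnDeriv_eq _ _ h.1]
  · rw [← RCLike.im_eq_complex_im, ← integral_im (c.integrable_rnDeriv ν).integrableOn]
    change ∫ x in A, c.im.rnDeriv ν x ∂ν = c.im A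
    rw [← withDensityᵥ_apply (SignedMeasure.integrable_rnDeriv _ _) hA,
      SignedMeasure.withDensityᵥ_rnDeriv_eq _ _ h.2]

theorem setIntegral_rnDeriv (c : ComplexMeasure α) (ν : Measure α) [SigmaFinite ν]
    (h : c ≪ᵥ ν.toENNRealVectorMeasure) {A : Set α} (hA : MeasurableSet A) :
    ∫ x in A, c.rnDeriv ν x ∂ν = c A := by
  rw [← withDensityᵥ_apply (c.integrable_rnDeriv ν) hA, c.withDensityᵥ_rnDeriv_eq ν h]

end MeasureTheory.ComplexMeasure

section Densities

variable {ν : Measure α} {Γ : ι → ι → α → ℂ}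

lemma integrable_kernelQuadForm (hΓ : ∀ n m, Integrable (Γ n m) ν) (S : Finset ι) (v : ι → ℂ) :
    Integrable (fun x => kernelQuadForm S (fun n m => Γ n m x) v) ν :=
  integrable_finsetSum _ fun n _ => integrable_finsetSum _ fun m _ => (hΓ n m).const_mul _

lemma integral_kernelQuadForm (hΓ : ∀ n m, Integrable (Γ n m) ν) (S : Finset ι) (v : ι → ℂ) :
    ∫ x, kernelQuadForm S (fun n m => Γ n m x) v ∂ν
      = kernelQuadForm S (fun n m => ∫ x, Γ n m x ∂ν) v := by
  unfold kernelQuadForm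
  rw [integral_finsetSum _ fun n _ =>
    integrable_finsetSum _ fun m _ => (hΓ n m).const_mul _]
  refine Finset.sum_congr rfl fun n _ => ?_
  rw [integral_finsetSum _ fun m _ => (hΓ n m).const_mul _]
  exact Finset.sum_congr rfl fun m _ => integral_const_mul _ _

theorem ae_isPosSemidefKernel_of_setIntegral [Countable ι] (hΓ : ∀ n m, Integrable (Γ n m) ν)
    (hK : ∀ A, MeasurableSet A → IsPosSemidefKernel fun n m => ∫ x in A, Γ n m x ∂ν) :
    ∀ᵐ x ∂ν, IsPosSemidefKernel fun n m => Γ n m x := by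
  have hform : ∀ v S, ∀ᵐ x ∂ν, 0 ≤ kernelQuadForm S (fun n m => Γ n m x) v := fun v S =>
    Complex.ae_nonneg_of_forall_setIntegral_nonneg (integrable_kernelQuadForm hΓ S v)
      fun A hA _ => by
        rw [integral_kernelQuadForm fun n m => (hΓ n m).restrict]
        exact hK A hA S v
  have hclosed : ∀ x, IsClosed {v | ∀ S, 0 ≤ kernelQuadForm S (fun n m => Γ n m x) v} :=
    fun x => Set.ofPred_forall _ ▸ isClosed_iInter fun S =>
      isClosed_le continuous_const (continuous_kernelQuadForm S _)
  filter_upwards [ae_forall_of_forall_ae_of_isClosed hclosed fun v => ae_all_iff.2 (hform v)]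
    with x hx S v using hx v S

end Densities

namespace MeasureTheory.SignedMeasure

def toMeasureOfNonneg (s : SignedMeasure α) (hs : ∀ A, MeasurableSet A → 0 ≤ s A) :
    Measure α :=
  s.toMeasureOfZeroLE Set.univ MeasurableSet.univ <|
    (VectorMeasure.restrict_le_restrict_iff _ _ MeasurableSet.univ).2 fun A hA _ => hs A hA

lemma toMeasureOfNonneg_apply (s : SignedMeasure α) (hs : ∀ A, MeasurableSet A → 0 ≤ s A)
    {A : Set α} (hA : MeasurableSet A) : s.toMeasureOfNonneg hs A = ENNReal.ofReal (s A) := by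
  rw [toMeasureOfNonneg, toMeasureOfZeroLE_apply _ _ _ hA, ENNReal.ofReal,
    Real.toNNReal_of_nonneg (hs A hA)]
  simp only [Set.univ_inter]

end MeasureTheory.SignedMeasure

section TraceMeasure

variable {μ : ι → ι → ComplexMeasure α}
  (hμ : ∀ A, MeasurableSet A → IsPosSemidefKernel fun n m => μ n m A)
include hμ

lemma re_diag_nonneg (n : ι) {A : Set α} (hA : MeasurableSet A) : 0 ≤ (μ n n A).re :=
  (Complex.nonneg_iff.1 ((hμ A hA).diag_nonneg n)).1

def traceMeasure : Measure α :=
  Measure.sum fun n => (μ n n).re.toMeasureOfNonneg fun _ hA => re_diag_nonneg hμ n hA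

lemma traceMeasure_apply {A : Set α} (hA : MeasurableSet A) :
    traceMeasure hμ A = ∑' n, ENNReal.ofReal (μ n n A).re := by
  rw [traceMeasure, Measure.sum_apply _ hA]
  exact tsum_congr fun n => SignedMeasure.toMeasureOfNonneg_apply _ _ hA

lemma absolutelyContinuous_traceMeasure (n m : ι) :
    μ n m ≪ᵥ (traceMeasure hμ).toENNRealVectorMeasure := by
  refine VectorMeasure.AbsolutelyContinuous.mk fun A hA hγA => ?_
  rw [Measure.toENNRealVectorMeasure_apply_measurable hA, traceMeasure_apply hμ hA,
    ENNReal.tsum_eq_zero] at hγA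
  have hdiag (k : ι) : μ k k A = 0 :=
    le_antisymm (Complex.nonpos_iff.2 ⟨ENNReal.ofReal_eq_zero.1 (hγA k),
      (Complex.nonneg_iff.1 ((hμ A hA).diag_nonneg k)).2.symm⟩) ((hμ A hA).diag_nonneg k)
  exact (hμ A hA).eq_zero_of_diag_eq_zero (hdiag n) (hdiag m)

variable (hsum : Summable fun n => (μ n n Set.univ).re)
include hsum

lemma summable_re_diag {A : Set α} (hA : MeasurableSet A) : Summable fun n => (μ n n A).re :=
  hsum.of_nonneg_of_le (fun n => re_diag_nonneg hμ n hA) fun n => by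
    have hsplit : μ n n Set.univ = μ n n A + μ n n Aᶜ := by
      rw [← VectorMeasure.of_union disjoint_compl_right hA hA.compl, Set.union_compl_self]
    rw [hsplit, Complex.add_re]
    linarith [re_diag_nonneg hμ n hA.compl]

lemma traceMeasure_apply_eq_ofReal {A : Set α} (hA : MeasurableSet A) :
    traceMeasure hμ A = ENNReal.ofReal (∑' n, (μ n n A).re) := by
  rw [traceMeasure_apply hμ hA, ENNReal.ofReal_tsum_of_nonneg
    (fun n => re_diag_nonneg hμ n hA) (summable_re_diag hμ hsum hA)]

lemma traceMeasure_toReal_apply {A : Set α} (hA : MeasurableSet A) :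
    (traceMeasure hμ A).toReal = ∑' n, (μ n n A).re := by
  rw [traceMeasure_apply_eq_ofReal hμ hsum hA,
    ENNReal.toReal_ofReal (tsum_nonneg fun n => re_diag_nonneg hμ n hA)]

lemma isFiniteMeasure_traceMeasure : IsFiniteMeasure (traceMeasure hμ) :=
  ⟨by rw [traceMeasure_apply_eq_ofReal hμ hsum .univ]; exact ENNReal.ofReal_lt_top⟩

lemma diag_le_traceMeasure (n : ι) {A : Set α} (hA : MeasurableSet A) :
    μ n n A ≤ ((traceMeasure hμ).real A : ℂ) := by
  refine Complex.le_def.2 ⟨?_, ?_⟩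
  · rw [Complex.ofReal_re, measureReal_def, traceMeasure_toReal_apply hμ hsum hA]
    exact (summable_re_diag hμ hsum hA).le_tsum n fun k _ => re_diag_nonneg hμ k hA
  · rw [Complex.ofReal_im, ← (Complex.nonneg_iff.1 ((hμ A hA).diag_nonneg n)).2]

end TraceMeasure

end

/-- construction of the matrix-of-densities (operator-valued) measure from
a positive-semidefinite matrix of finite complex measures, via Radon–Nikodym with
respect to `γ := Σ_n μ_{n,n}`. -/
theorem stmt19 (μ : ℕ → ℕ → MeasureTheory.ComplexMeasure (ℝ × ℝ))
    (hpsd : ∀ c : ℕ →₀ ℂ, ∀ A : Set (ℝ × ℝ), MeasurableSet A →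
      0 ≤ (∑ n ∈ c.support, ∑ m ∈ c.support,
            c n * (starRingEnd ℂ) (c m) * μ n m A).re ∧
      (∑ n ∈ c.support, ∑ m ∈ c.support,
            c n * (starRingEnd ℂ) (c m) * μ n m A).im = 0)
    (hsum : Summable (fun n : ℕ => (μ n n Set.univ).re)) :
    ∃ γ : Measure (ℝ × ℝ), IsFiniteMeasure γ ∧
      (∀ A : Set (ℝ × ℝ), MeasurableSet A → (γ A).toReal = ∑' n : ℕ, (μ n n A).re) ∧
      ∃ Γ : ℕ → ℕ → (ℝ × ℝ) → ℂ,
        (∀ n m : ℕ, Measurable (Γ n m)) ∧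
        (∀ n m : ℕ, ∀ A : Set (ℝ × ℝ), MeasurableSet A →
          μ n m A = ∫ x in A, Γ n m x ∂γ) ∧
        (∀ᵐ x ∂γ,
          (∀ n : ℕ, 0 ≤ (Γ n n x).re ∧ (Γ n n x).re ≤ 1 ∧ (Γ n n x).im = 0) ∧
          (∀ n m : ℕ, Γ m n x = (starRingEnd ℂ) (Γ n m x)) ∧
          (∀ c : ℕ →₀ ℂ,
            0 ≤ (∑ n ∈ c.support, ∑ m ∈ c.support,
                  c n * (starRingEnd ℂ) (c m) * Γ n m x).re ∧
            (∑ n ∈ c.support, ∑ m ∈ c.support,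
                  c n * (starRingEnd ℂ) (c m) * Γ n m x).im = 0)) ∧
        Summable (fun n : ℕ => ∫ x, (Γ n n x).re ∂γ) ∧
        (∑' n : ℕ, ∫ x, (Γ n n x).re ∂γ) = ∑' n : ℕ, (μ n n Set.univ).re := by
  have hK : ∀ A, MeasurableSet A → IsPosSemidefKernel fun n m => μ n m A := fun A hA =>
    isPosSemidefKernel_iff_finsupp.2 fun c =>
      Complex.nonneg_iff.2 ⟨(hpsd c A hA).1, (hpsd c A hA).2.symm⟩
  set γ := traceMeasure hK
  have hfin := isFiniteMeasure_traceMeasure hK hsum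
  set Γ : ℕ → ℕ → ℝ × ℝ → ℂ := fun n m => (μ n m).rnDeriv γ
  have hΓint (n m : ℕ) : Integrable (Γ n m) γ := (μ n m).integrable_rnDeriv γ
  have hΓ (n m : ℕ) {A : Set (ℝ × ℝ)} (hA : MeasurableSet A) : ∫ x in A, Γ n m x ∂γ = μ n m A :=
    (μ n m).setIntegral_rnDeriv γ (absolutelyContinuous_traceMeasure hK n m) hA
  have hΓK : ∀ᵐ x ∂γ, IsPosSemidefKernel fun n m => Γ n m x :=
    ae_isPosSemidefKernel_of_setIntegral hΓint fun A hA => by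
      simpa only [hΓ _ _ hA] using hK A hA
  have hΓle : ∀ᵐ x ∂γ, ∀ n, Γ n n x ≤ 1 := ae_all_iff.2 fun n =>
    Complex.ae_le_of_forall_setIntegral_le (hΓint n n) (integrable_const 1) fun A hA _ => by
      rw [hΓ n n hA, setIntegral_const, Complex.real_smul, mul_one]
      exact diag_le_traceMeasure hK hsum n hA
  have htrace (n : ℕ) : ∫ x, (Γ n n x).re ∂γ = (μ n n Set.univ).re := by
    rw [← hΓ n n .univ, Measure.restrict_univ]
    exact integral_re (hΓint n n)
  refine ⟨γ, hfin, fun A hA => traceMeasure_toReal_apply hK hsum hA, Γ,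
    fun n m => (μ n m).measurable_rnDeriv γ, fun n m A hA => (hΓ n m hA).symm, ?_,
    hsum.congr fun n => (htrace n).symm, tsum_congr htrace⟩
  filter_upwards [hΓK, hΓle] with x hx hx1
  refine ⟨fun n => ?_, hx.conj_symm, fun c => ?_⟩
  · obtain ⟨h0, him⟩ := Complex.nonneg_iff.1 (hx.diag_nonneg n)
    exact ⟨h0, (Complex.le_def.1 (hx1 n)).1, him.symm⟩
  · obtain ⟨h0, him⟩ := Complex.nonneg_iff.1 (hx c.support c)
    exact ⟨h0, him.symm⟩
end
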